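/- Let α ≥ 0, let f* : ℝ → ℂ be continuous, 2π-periodic with |f*(t)| ≤ 1 for all t, and let f = P_α[f*]. Then for every z ∈ 𝔻, |f(z) − ((1−|z|²)^{α+1}/(1+|z|²))·f(0)| ≤ (2^{α+2}/π)·arctan|z| + 2^{α+1}·(1−|z|)·(1 − (1−|z|)^α). -/

import Mathlib

open Complex MeasureTheory Real Set

noncomputable section

/-- Wirtinger derivative `∂f = (f_x - i f_y)/2` of a function `f : ℂ → ℂ`,
viewed as a real-differentiable map. -/
def wdz (f : ℂ → ℂ) (z : ℂ) : ℂ :=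
  (fderiv ℝ f z 1 - Complex.I * fderiv ℝ f z Complex.I) / 2

/-- Wirtinger derivative `∂̄f = (f_x + i f_y)/2`. -/
def wdzbar (f : ℂ → ℂ) (z : ℂ) : ℂ :=
  (fderiv ℝ f z 1 + Complex.I * fderiv ℝ f z Complex.I) / 2

/-- The `α`-harmonic Poisson kernel
`P_α(z) = (1-|z|²)^{α+1} / ((1-z)(1-z̄)^{α+1})` (principal powers). -/
def poissonKernelAlpha (α : ℝ) (z : ℂ) : ℂ :=
  (((1 - ‖z‖ ^ 2) ^ (α + 1) : ℝ) : ℂ) /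
    ((1 - z) * (1 - (starRingEnd ℂ) z) ^ ((α : ℂ) + 1))

/-- The `α`-harmonic extension `P_α[F](z) = (1/2π) ∫₀^{2π} P_α(z e^{-it}) F(t) dt`. -/
def poissonExt (α : ℝ) (F : ℝ → ℂ) (z : ℂ) : ℂ :=
  (1 / (2 * Real.pi) : ℂ) *
    ∫ t in (0:ℝ)..(2 * Real.pi), poissonKernelAlpha α (z * Complex.exp (-Complex.I * t)) * F t

/-- The angular derivative `∂_θ f(z) = i (z ∂f(z) - z̄ ∂̄f(z))`. -/
def angularDeriv (f : ℂ → ℂ) (z : ℂ) : ℂ :=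
  Complex.I * (z * wdz f z - (starRingEnd ℂ) z * wdzbar f z)

/-- The integral mean `M_p(r,g) = ((1/2π) ∫₀^{2π} |g(r e^{iθ})|^p dθ)^{1/p}`. -/
def Mp (p : ℝ) (r : ℝ) (g : ℂ → ℂ) : ℝ :=
  ((1 / (2 * Real.pi)) *
      ∫ θ in (0:ℝ)..(2 * Real.pi),
        ‖g ((r : ℂ) * Complex.exp (Complex.I * θ))‖ ^ p) ^ (1 / p)

/-- The boundary `L^p` norm `‖G‖_{L^p} = ((1/2π) ∫₀^{2π} |G(t)|^p dt)^{1/p}`. -/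
def lpNormBdry (p : ℝ) (G : ℝ → ℂ) : ℝ :=
  ((1 / (2 * Real.pi)) * ∫ t in (0:ℝ)..(2 * Real.pi), ‖G t‖ ^ p) ^ (1 / p)

/-- The constant `c_α = Γ(α+1)/Γ(α/2+1)²`. -/
def cAlpha (α : ℝ) : ℝ := Real.Gamma (α + 1) / (Real.Gamma (α / 2 + 1)) ^ 2

/-- `I_α(r) = (1/2π) ∫₀^{2π} (1-r²)^α / |1 - r e^{it}|^{α+1} dt`. -/
def Ialpha (α r : ℝ) : ℝ :=
  (1 / (2 * Real.pi)) *
    ∫ t in (0:ℝ)..(2 * Real.pi),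
      (1 - r ^ 2) ^ α / (‖1 - (r : ℂ) * Complex.exp (Complex.I * t)‖) ^ (α + 1)

/-- `g_α(z) = ((1-|z|²)/(1-z̄))^α` (principal complex power). -/
def gAlpha (α : ℝ) (z : ℂ) : ℂ :=
  ((((1 - ‖z‖ ^ 2 : ℝ)) : ℂ) / (1 - (starRingEnd ℂ) z)) ^ (α : ℂ)

end

/-!
Writing `P(w) = (1 - |w|²)/|1 - w|²` for the classical Poisson kernel, one has
`P_α(w) = (1 - |w|²)^α (1 - w̄)^(-α) P(w)`. With `r = |w|` and `c = (1 - r²)/(1 + r²)`,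
`P_α(w) - (1 - r²)^α c = (1 - r²)^α (1 - w̄)^(-α) (P(w) - c) + (1 - r²)^α c ((1 - w̄)^(-α) - 1)`.
Since `|(1 - w̄)^(-α)| ≤ (1 - r)^(-α)` and `|(1 - w̄)^(-α) - 1| ≤ (1 - r)^(-α) - 1`, the first term
is at most `2^α |P(w) - c|` and the second at most `2^(α+1) (1 - r) (1 - (1 - r)^α)`.
As `f(0)` is the mean of `f*` and `|f*| ≤ 1`, it remains to integrate: `P(r e^{iθ}) - c` has the
sign of `cos θ`, and the antiderivative `2 arctan ((1 + r)/(1 - r) · tan (θ/2))` of `P(r e^{iθ})`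
gives `(1/2π) ∫ |P(r e^{iθ}) - c| dθ = (4/π) arctan r`.
-/

lemma one_sub_norm_le_norm_one_sub (v : ℂ) : 1 - ‖v‖ ≤ ‖1 - v‖ := by
  simpa using norm_sub_norm_le (1 : ℂ) v

lemma norm_one_sub_cpow_neg_le {α : ℝ} (hα : 0 ≤ α) {v : ℂ} (hv : ‖v‖ < 1) :
    ‖(1 - v) ^ (-(α : ℂ))‖ ≤ (1 - ‖v‖) ^ (-α) := by
  rw [← Complex.ofReal_neg, Complex.norm_cpow_real]
  exact Real.rpow_le_rpow_of_nonpos (by linarith) (one_sub_norm_le_norm_one_sub v) (by linarith)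

lemma one_sub_mem_slitPlane {v : ℂ} (hv : ‖v‖ < 1) : 1 - v ∈ slitPlane := by
  refine Or.inl ?_
  have := (abs_le.mp (abs_re_le_norm v)).2
  simp only [sub_re, one_re]
  linarith

-- Along `s ↦ s * v` the derivative is dominated by that of the real majorant `(1 - s‖v‖)^(-α)`.
lemma norm_one_sub_cpow_neg_sub_one_le {α : ℝ} (hα : 0 ≤ α) {v : ℂ} (hv : ‖v‖ < 1) :
    ‖(1 - v) ^ (-(α : ℂ)) - 1‖ ≤ (1 - ‖v‖) ^ (-α) - 1 := by
  have hsv : ∀ s ∈ Icc (0 : ℝ) 1, ‖(s : ℂ) * v‖ < 1 := fun s hs => by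
    rw [norm_mul, Complex.norm_real, Real.norm_of_nonneg hs.1]
    nlinarith [norm_nonneg v, hs.2]
  have hf : ∀ s ∈ Icc (0 : ℝ) 1, HasDerivAt (fun s : ℝ => (1 - (s : ℂ) * v) ^ (-(α : ℂ)) - 1)
      (-(α : ℂ) * (1 - (s : ℂ) * v) ^ (-(α : ℂ) - 1) * -v) s := fun s hs => by
    have hlin : HasDerivAt (fun s : ℝ => 1 - (s : ℂ) * v) (-v) s := by
      simpa using ((hasDerivAt_id s).ofReal_comp.mul_const v).const_sub 1
    exact ((Complex.hasStrictDerivAt_cpow_const (one_sub_mem_slitPlane (hsv s hs))).hasDerivAt.comp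
      s hlin).sub_const 1
  have hB : ∀ s ∈ Icc (0 : ℝ) 1, HasDerivAt (fun s : ℝ => (1 - s * ‖v‖) ^ (-α) - 1)
      (α * ‖v‖ * (1 - s * ‖v‖) ^ (-α - 1)) s := fun s hs => by
    have hpos : 0 < 1 - s * ‖v‖ := by nlinarith [norm_nonneg v, hs.1, hs.2]
    have hlin : HasDerivAt (fun s : ℝ => 1 - s * ‖v‖) (-‖v‖) s := by
      simpa using ((hasDerivAt_id s).mul_const ‖v‖).const_sub 1
    exact ((hlin.rpow_const (p := -α) (Or.inl hpos.ne')).sub_const 1).congr_deriv (by ring)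
  have hbound : ∀ s ∈ Ico (0 : ℝ) 1,
      ‖-(α : ℂ) * (1 - (s : ℂ) * v) ^ (-(α : ℂ) - 1) * -v‖ ≤ α * ‖v‖ * (1 - s * ‖v‖) ^ (-α - 1) :=
    fun s hs => by
    have hsv' := hsv s (Ico_subset_Icc_self hs)
    have hpow : ‖(1 - (s : ℂ) * v) ^ (-(α : ℂ) - 1)‖ ≤ (1 - ‖(s : ℂ) * v‖) ^ (-α - 1) := by
      rw [show -(α : ℂ) - 1 = ((-α - 1 : ℝ) : ℂ) by push_cast; ring, Complex.norm_cpow_real]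
      exact Real.rpow_le_rpow_of_nonpos (by linarith) (one_sub_norm_le_norm_one_sub _)
        (by linarith)
    rw [norm_mul, Complex.norm_real, Real.norm_of_nonneg hs.1] at hpow
    rw [norm_mul, norm_mul, norm_neg, norm_neg, Complex.norm_real, Real.norm_of_nonneg hα]
    calc α * ‖(1 - (s : ℂ) * v) ^ (-(α : ℂ) - 1)‖ * ‖v‖
        ≤ α * (1 - s * ‖v‖) ^ (-α - 1) * ‖v‖ := by gcongr
      _ = α * ‖v‖ * (1 - s * ‖v‖) ^ (-α - 1) := by ring
  simpa using image_norm_le_of_norm_deriv_right_le_deriv_boundary'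
    (fun s hs => (hf s hs).continuousAt.continuousWithinAt)
    (fun s hs => (hf s (Ico_subset_Icc_self hs)).hasDerivWithinAt) (by simp)
    (fun s hs => (hB s hs).continuousAt.continuousWithinAt)
    (fun s hs => (hB s (Ico_subset_Icc_self hs)).hasDerivWithinAt) hbound
    (right_mem_Icc.mpr zero_le_one)

lemma poissonKernel_zero_one (w : ℂ) : poissonKernel 0 w 1 = (1 - ‖w‖ ^ 2) / ‖1 - w‖ ^ 2 := by
  simp [poissonKernel_def]

lemma poissonKernelAlpha_eq (α : ℝ) {w : ℂ} (hw : ‖w‖ < 1) :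
    poissonKernelAlpha α w = (((1 - ‖w‖ ^ 2) ^ α : ℝ) : ℂ) *
      (1 - (starRingEnd ℂ) w) ^ (-(α : ℂ)) * poissonKernel 0 w 1 := by
  have hq : 0 < 1 - ‖w‖ ^ 2 := by nlinarith [norm_nonneg w]
  have hb : 1 - (starRingEnd ℂ) w ≠ 0 :=
    slitPlane_ne_zero (one_sub_mem_slitPlane (by rwa [Complex.norm_conj]))
  have ha : (1 - w) ≠ 0 := slitPlane_ne_zero (one_sub_mem_slitPlane hw)
  have hnorm : (1 - w) * (1 - (starRingEnd ℂ) w) = ((‖1 - w‖ ^ 2 : ℝ) : ℂ) := by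
    rw [Complex.ofReal_pow, ← Complex.mul_conj', map_sub, map_one]
  rw [poissonKernelAlpha, poissonKernel_zero_one, Complex.cpow_add _ _ hb, Complex.cpow_one,
    Complex.cpow_neg, Real.rpow_add_one hq.ne', mul_left_comm, mul_assoc, hnorm]
  push_cast
  field_simp

lemma norm_poissonKernelAlpha_sub_le {α : ℝ} (hα : 0 ≤ α) {w : ℂ} (hw : ‖w‖ < 1) :
    ‖poissonKernelAlpha α w - (((1 - ‖w‖ ^ 2) ^ (α + 1) / (1 + ‖w‖ ^ 2) : ℝ) : ℂ)‖ ≤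
      (1 + ‖w‖) ^ α * |poissonKernel 0 w 1 - (1 - ‖w‖ ^ 2) / (1 + ‖w‖ ^ 2)| +
        (1 - ‖w‖ ^ 2) / (1 + ‖w‖ ^ 2) * ((1 + ‖w‖) ^ α - (1 - ‖w‖ ^ 2) ^ α) := by
  set r := ‖w‖
  set q := (1 - r ^ 2) ^ α
  set c := (1 - r ^ 2) / (1 + r ^ 2)
  set u := (1 - (starRingEnd ℂ) w) ^ (-(α : ℂ))
  have hr : 0 < 1 - r := by linarith
  have hq : q * (1 - r) ^ (-α) = (1 + r) ^ α := by
    simp only [q]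
    rw [show 1 - r ^ 2 = (1 + r) * (1 - r) by ring, Real.mul_rpow (by positivity) hr.le,
      mul_assoc, ← Real.rpow_add hr, add_neg_cancel, Real.rpow_zero, mul_one]
  have hc : 0 ≤ c := div_nonneg (by nlinarith [norm_nonneg w]) (by positivity)
  have hv : ‖(starRingEnd ℂ) w‖ < 1 := by rwa [Complex.norm_conj]
  have hu : ‖u‖ ≤ (1 - r) ^ (-α) := by
    simpa [r] using norm_one_sub_cpow_neg_le hα hv
  have hu1 : ‖u - 1‖ ≤ (1 - r) ^ (-α) - 1 := by
    simpa [r] using norm_one_sub_cpow_neg_sub_one_le hα hv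
  have hsplit : poissonKernelAlpha α w - ((q * c : ℝ) : ℂ) =
      (q : ℂ) * u * ((poissonKernel 0 w 1 - c : ℝ) : ℂ) + ((q * c : ℝ) : ℂ) * (u - 1) := by
    rw [poissonKernelAlpha_eq α hw]
    push_cast
    ring
  rw [show (1 - r ^ 2) ^ (α + 1) / (1 + r ^ 2) = q * c by
    rw [Real.rpow_add_one (by nlinarith [norm_nonneg w])]; ring, hsplit]
  have hq0 : 0 ≤ q := Real.rpow_nonneg (by nlinarith [norm_nonneg w]) α
  calc _ ≤ q * ‖u‖ * |poissonKernel 0 w 1 - c| + q * c * ‖u - 1‖ := by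
        refine (norm_add_le _ _).trans_eq ?_
        simp only [norm_mul, Complex.norm_real, Real.norm_eq_abs, abs_of_nonneg hq0,
          abs_of_nonneg hc]
    _ ≤ q * (1 - r) ^ (-α) * |poissonKernel 0 w 1 - c| + q * c * ((1 - r) ^ (-α) - 1) := by
        gcongr
    _ = (1 + r) ^ α * |poissonKernel 0 w 1 - c| + c * ((1 + r) ^ α - q) := by
        rw [hq, ← hq]; ring

lemma one_sub_sq_div_one_add_sq_mul_le {α r : ℝ} (hα : 0 ≤ α) (hr0 : 0 ≤ r) (hr1 : r < 1) :
    (1 - r ^ 2) / (1 + r ^ 2) * ((1 + r) ^ α - (1 - r ^ 2) ^ α) ≤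
      2 ^ (α + 1) * (1 - r) * (1 - (1 - r) ^ α) := by
  have hc : (1 - r ^ 2) / (1 + r ^ 2) ≤ 2 * (1 - r) := by
    rw [div_le_iff₀ (by positivity)]
    nlinarith
  have hd : 0 ≤ 1 - (1 - r) ^ α := sub_nonneg.mpr (Real.rpow_le_one (by linarith) (by linarith) hα)
  have hfactor : (1 + r) ^ α - (1 - r ^ 2) ^ α = (1 + r) ^ α * (1 - (1 - r) ^ α) := by
    rw [show 1 - r ^ 2 = (1 + r) * (1 - r) by ring, Real.mul_rpow (by linarith) (by linarith)]
    ring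
  calc _ ≤ 2 * (1 - r) * (2 ^ α * (1 - (1 - r) ^ α)) := by
        rw [hfactor]
        gcongr
        nlinarith
    _ = 2 ^ (α + 1) * (1 - r) * (1 - (1 - r) ^ α) := by
        rw [Real.rpow_add_one two_ne_zero]; ring

lemma one_sub_two_mul_mul_cos_add_sq_pos {ρ : ℝ} (hρ : |ρ| < 1) (s : ℝ) :
    0 < 1 - 2 * ρ * Real.cos s + ρ ^ 2 := by
  have : ρ * Real.cos s ≤ |ρ| := (le_abs_self _).trans <| by
    rw [abs_mul]; exact mul_le_of_le_one_right (abs_nonneg ρ) (Real.abs_cos_le_one s)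
  nlinarith [sq_abs ρ, abs_nonneg ρ]

lemma poissonKernel_zero_ofReal_mul_exp (r φ : ℝ) :
    poissonKernel 0 (r * Complex.exp (φ * Complex.I)) 1 =
      (1 - r ^ 2) / (1 - 2 * r * Real.cos φ + r ^ 2) := by
  rw [poissonKernel_zero_one, norm_mul, Complex.norm_exp_ofReal_mul_I, mul_one,
    Complex.norm_real, Real.norm_eq_abs, sq_abs, ← Complex.normSq_eq_norm_sq,
    Complex.normSq_apply]
  simp only [sub_re, one_re, sub_im, one_im, re_ofReal_mul, im_ofReal_mul, exp_ofReal_mul_I_re,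
    exp_ofReal_mul_I_im]
  congr 1
  nlinarith [Real.sin_sq_add_cos_sq φ]

lemma poisson_sub_const {ρ : ℝ} (hρ : |ρ| < 1) (s : ℝ) :
    (1 - ρ ^ 2) / (1 - 2 * ρ * Real.cos s + ρ ^ 2) - (1 - ρ ^ 2) / (1 + ρ ^ 2) =
      ρ * Real.cos s * (2 * (1 - ρ ^ 2) / ((1 - 2 * ρ * Real.cos s + ρ ^ 2) * (1 + ρ ^ 2))) := by
  rw [div_sub_div _ _ (one_sub_two_mul_mul_cos_add_sq_pos hρ s).ne' (by positivity),
    mul_div_assoc']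
  ring

lemma hasDerivAt_two_mul_arctan_mul_tan_half {ρ : ℝ} (hρ : |ρ| < 1) {s : ℝ}
    (hs : Real.cos (s / 2) ≠ 0) :
    HasDerivAt (fun x => 2 * Real.arctan ((1 + ρ) / (1 - ρ) * Real.tan (x / 2)))
      ((1 - ρ ^ 2) / (1 - 2 * ρ * Real.cos s + ρ ^ 2)) s := by
  have hρ' := abs_lt.mp hρ
  have hhalf : HasDerivAt (fun x : ℝ => x / 2) (1 / 2) s := by
    simpa using (hasDerivAt_id s).div_const 2
  have htan : HasDerivAt (fun x => Real.tan (x / 2)) (1 / Real.cos (s / 2) ^ 2 * (1 / 2)) s :=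
    (Real.hasDerivAt_tan hs).comp (h₂ := Real.tan) s hhalf
  refine (((htan.const_mul ((1 + ρ) / (1 - ρ))).arctan).const_mul 2).congr_deriv ?_
  have hcos : Real.cos s = 2 * Real.cos (s / 2) ^ 2 - 1 := by
    have := Real.cos_sq (s / 2)
    rw [show 2 * (s / 2) = s by ring] at this
    linarith
  have hsin : Real.sin (s / 2) ^ 2 = 1 - Real.cos (s / 2) ^ 2 := by
    linarith [Real.sin_sq_add_cos_sq (s / 2)]
  have h1 : (1 : ℝ) - ρ ≠ 0 := by linarith
  have hden := one_sub_two_mul_mul_cos_add_sq_pos hρ s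
  rw [hcos] at hden ⊢
  rw [Real.tan_eq_sin_div_cos]
  field_simp
  rw [hsin]
  ring

lemma continuous_poisson {ρ : ℝ} (hρ : |ρ| < 1) :
    Continuous fun s => (1 - ρ ^ 2) / (1 - 2 * ρ * Real.cos s + ρ ^ 2) :=
  continuous_const.div (by fun_prop) fun s => (one_sub_two_mul_mul_cos_add_sq_pos hρ s).ne'

lemma integral_poisson_sub_const {ρ : ℝ} (hρ : |ρ| < 1) :
    ∫ s in -(π / 2)..π / 2,
        ((1 - ρ ^ 2) / (1 - 2 * ρ * Real.cos s + ρ ^ 2) - (1 - ρ ^ 2) / (1 + ρ ^ 2)) =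
      4 * Real.arctan ((1 + ρ) / (1 - ρ)) - π * ((1 - ρ ^ 2) / (1 + ρ ^ 2)) := by
  have hderiv : ∀ s ∈ uIcc (-(π / 2)) (π / 2),
      HasDerivAt (fun x => 2 * Real.arctan ((1 + ρ) / (1 - ρ) * Real.tan (x / 2)))
        ((1 - ρ ^ 2) / (1 - 2 * ρ * Real.cos s + ρ ^ 2)) s := fun s hs => by
    rw [uIcc_of_le (by linarith [Real.pi_pos])] at hs
    refine hasDerivAt_two_mul_arctan_mul_tan_half hρ (Real.cos_pos_of_mem_Ioo ⟨?_, ?_⟩).ne'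
    all_goals linarith [hs.1, hs.2, Real.pi_pos]
  rw [intervalIntegral.integral_sub ((continuous_poisson hρ).intervalIntegrable _ _)
    intervalIntegrable_const, intervalIntegral.integral_eq_sub_of_hasDerivAt hderiv
    ((continuous_poisson hρ).intervalIntegrable _ _), intervalIntegral.integral_const,
    smul_eq_mul, show π / 2 / 2 = π / 4 by ring, show -(π / 2) / 2 = -(π / 4) by ring,
    Real.tan_neg, Real.tan_pi_div_four]
  simp only [mul_one, mul_neg, Real.arctan_neg]
  ring

lemma arctan_one_add_div_one_sub {r : ℝ} (hr : r < 1) :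
    Real.arctan ((1 + r) / (1 - r)) = π / 4 + Real.arctan r := by
  rw [← Real.arctan_one, Real.arctan_add (by linarith), one_mul]

-- The integrand has the sign of `cos s`, and shifting by `π` turns `r` into `-r`.
lemma integral_abs_poisson_sub_const {r : ℝ} (hr0 : 0 ≤ r) (hr1 : r < 1) (a : ℝ) :
    ∫ s in a..a + 2 * π,
        |(1 - r ^ 2) / (1 - 2 * r * Real.cos s + r ^ 2) - (1 - r ^ 2) / (1 + r ^ 2)| =
      8 * Real.arctan r := by
  have hr : |r| < 1 := by rwa [abs_of_nonneg hr0]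
  have hr' : |-r| < 1 := by rwa [abs_neg]
  set c := (1 - r ^ 2) / (1 + r ^ 2)
  set g := fun s => (1 - r ^ 2) / (1 - 2 * r * Real.cos s + r ^ 2) - c
  have hg : Continuous g := (continuous_poisson hr).sub continuous_const
  have hper : Function.Periodic (fun s => |g s|) (2 * π) := fun s => by
    simp only [g, Real.cos_add_two_pi]
  have hshift : ∀ s, g (s + π) = (1 - (-r) ^ 2) / (1 - 2 * (-r) * Real.cos s + (-r) ^ 2) -
      (1 - (-r) ^ 2) / (1 + (-r) ^ 2) := fun s => by
    simp only [g, c, Real.cos_add_pi]; ring_nf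
  have hfactor : ∀ ρ, |ρ| < 1 → ∀ s,
      0 ≤ 2 * (1 - ρ ^ 2) / ((1 - 2 * ρ * Real.cos s + ρ ^ 2) * (1 + ρ ^ 2)) := fun ρ hρ s =>
    div_nonneg (by nlinarith [sq_abs ρ, abs_nonneg ρ])
      (mul_nonneg (one_sub_two_mul_mul_cos_add_sq_pos hρ s).le (by positivity))
  have hright : ∫ s in -(π / 2)..π / 2, |g s| = ∫ s in -(π / 2)..π / 2, g s := by
    refine intervalIntegral.integral_congr fun s hs => abs_of_nonneg ?_
    rw [uIcc_of_le (by linarith [Real.pi_pos])] at hs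
    rw [show g s = _ from poisson_sub_const hr s]
    exact mul_nonneg (mul_nonneg hr0 (Real.cos_nonneg_of_mem_Icc hs)) (hfactor r hr s)
  have hleft : ∫ s in π / 2..π / 2 + π, |g s| = -∫ s in -(π / 2)..π / 2, g (s + π) := by
    have := intervalIntegral.integral_comp_add_right (fun s => |g s|) π
      (a := -(π / 2)) (b := π / 2)
    rw [neg_add_eq_sub, sub_half] at this
    rw [← intervalIntegral.integral_neg, ← this]
    refine intervalIntegral.integral_congr fun s hs => abs_of_nonpos ?_
    rw [uIcc_of_le (by linarith [Real.pi_pos])] at hs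
    rw [hshift, poisson_sub_const hr']
    exact mul_nonpos_of_nonpos_of_nonneg
      (mul_nonpos_of_nonpos_of_nonneg (by linarith) (Real.cos_nonneg_of_mem_Icc hs))
      (hfactor (-r) hr' s)
  rw [hper.intervalIntegral_add_eq a (-(π / 2)), ← intervalIntegral.integral_add_adjacent_intervals
    (b := π / 2) (hg.abs.intervalIntegrable _ _) (hg.abs.intervalIntegrable _ _),
    show -(π / 2) + 2 * π = π / 2 + π by ring, hright, hleft]
  simp only [hshift]
  rw [integral_poisson_sub_const hr, integral_poisson_sub_const hr',
    arctan_one_add_div_one_sub hr1, arctan_one_add_div_one_sub (by linarith), Real.arctan_neg]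
  ring

lemma norm_poissonKernelAlpha_ofReal_mul_exp_sub_le {α r : ℝ} (hα : 0 ≤ α) (hr0 : 0 ≤ r)
    (hr1 : r < 1) (φ : ℝ) :
    ‖poissonKernelAlpha α (r * Complex.exp (φ * Complex.I)) -
        (((1 - r ^ 2) ^ (α + 1) / (1 + r ^ 2) : ℝ) : ℂ)‖ ≤
      2 ^ α * |(1 - r ^ 2) / (1 - 2 * r * Real.cos φ + r ^ 2) - (1 - r ^ 2) / (1 + r ^ 2)| +
        2 ^ (α + 1) * (1 - r) * (1 - (1 - r) ^ α) := by
  have hw : ‖(r : ℂ) * Complex.exp (φ * Complex.I)‖ = r := by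
    rw [norm_mul, Complex.norm_exp_ofReal_mul_I, mul_one, Complex.norm_real,
      Real.norm_of_nonneg hr0]
  have := norm_poissonKernelAlpha_sub_le hα (hw ▸ hr1)
  rw [hw, poissonKernel_zero_ofReal_mul_exp] at this
  refine this.trans (add_le_add ?_ (one_sub_sq_div_one_add_sq_mul_le hα hr0 hr1))
  gcongr
  linarith

lemma poissonKernelAlpha_zero (α : ℝ) : poissonKernelAlpha α 0 = 1 := by
  simp [poissonKernelAlpha]

lemma continuousOn_poissonKernelAlpha (α : ℝ) :
    ContinuousOn (poissonKernelAlpha α) (Metric.ball 0 1) := by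
  have hball : ∀ w ∈ Metric.ball (0 : ℂ) 1, ‖w‖ < 1 := fun w hw => mem_ball_zero_iff.mp hw
  have hslit : ∀ w ∈ Metric.ball (0 : ℂ) 1, 1 - (starRingEnd ℂ) w ∈ slitPlane := fun w hw =>
    one_sub_mem_slitPlane (by rw [Complex.norm_conj]; exact hball w hw)
  refine ContinuousOn.div ?_ ?_ fun w hw => mul_ne_zero ?_ ?_
  · refine continuous_ofReal.comp_continuousOn <|
      ContinuousOn.rpow_const (by fun_prop) fun w hw => Or.inl ?_
    nlinarith [hball w hw, norm_nonneg w]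
  · exact (continuousOn_const.sub continuousOn_id).mul <|
      (continuousOn_const.sub continuous_conj.continuousOn).cpow_const hslit
  · exact slitPlane_ne_zero (one_sub_mem_slitPlane (hball w hw))
  · exact fun h => slitPlane_ne_zero (hslit w hw) ((Complex.cpow_eq_zero_iff _ _).mp h).1

lemma mul_exp_neg_I_mul (z : ℂ) (t : ℝ) :
    z * Complex.exp (-Complex.I * t) = ‖z‖ * Complex.exp ((z.arg - t : ℝ) * Complex.I) := by
  conv_lhs => rw [← Complex.norm_mul_exp_arg_mul_I z]
  rw [mul_assoc, ← Complex.exp_add]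
  push_cast
  ring_nf

lemma poissonExt_sub_mul_poissonExt_zero (α : ℝ) {F : ℝ → ℂ} (hF : Continuous F) {z : ℂ}
    (hz : z ∈ Metric.ball (0 : ℂ) 1) (C : ℂ) :
    poissonExt α F z - C * poissonExt α F 0 = (1 / (2 * π) : ℂ) *
      ∫ t in (0 : ℝ)..2 * π,
        (poissonKernelAlpha α (z * Complex.exp (-Complex.I * t)) - C) * F t := by
  have hmaps : ∀ t : ℝ, z * Complex.exp (-Complex.I * t) ∈ Metric.ball (0 : ℂ) 1 := fun t => by
    rwa [mem_ball_zero_iff, mul_exp_neg_I_mul, norm_mul, Complex.norm_exp_ofReal_mul_I, mul_one,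
      Complex.norm_real, norm_norm, ← mem_ball_zero_iff]
  have hker : Continuous fun t : ℝ => poissonKernelAlpha α (z * Complex.exp (-Complex.I * t)) :=
    (continuousOn_poissonKernelAlpha α).comp_continuous (by fun_prop) hmaps
  simp only [poissonExt, zero_mul, poissonKernelAlpha_zero, one_mul, sub_mul]
  rw [intervalIntegral.integral_sub (by apply Continuous.intervalIntegrable; fun_prop)
    (by apply Continuous.intervalIntegrable; fun_prop), intervalIntegral.integral_const_mul]
  ring

theorem schwarz_alpha_nonneg_general (α : ℝ) (hα : 0 ≤ α) (fs : ℝ → ℂ) (hcont : Continuous fs)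
    (hbd : ∀ t : ℝ, ‖fs t‖ ≤ 1) :
    ∀ z ∈ Metric.ball (0 : ℂ) 1,
      ‖poissonExt α fs z -
          ((((1 - ‖z‖ ^ 2) ^ (α + 1) / (1 + ‖z‖ ^ 2) : ℝ)) : ℂ) *
            poissonExt α fs 0‖ ≤
        (2 : ℝ) ^ (α + 2) / Real.pi * Real.arctan (‖z‖) +
          (2 : ℝ) ^ (α + 1) * (1 - ‖z‖) * (1 - (1 - ‖z‖) ^ α) := by
  intro z hz
  set r := ‖z‖
  have hr1 : r < 1 := mem_ball_zero_iff.mp hz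
  set K := (2 : ℝ) ^ (α + 1) * (1 - r) * (1 - (1 - r) ^ α)
  set G : ℝ → ℝ := fun s =>
    |(1 - r ^ 2) / (1 - 2 * r * Real.cos s + r ^ 2) - (1 - r ^ 2) / (1 + r ^ 2)|
  have hG : Continuous G :=
    ((continuous_poisson (by rwa [abs_norm])).sub continuous_const).abs
  have hpointwise : ∀ t : ℝ, ‖(poissonKernelAlpha α (z * Complex.exp (-Complex.I * t)) -
      (((1 - r ^ 2) ^ (α + 1) / (1 + r ^ 2) : ℝ) : ℂ)) * fs t‖ ≤ 2 ^ α * G (z.arg - t) + K :=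
    fun t => by
    rw [norm_mul, mul_exp_neg_I_mul]
    exact (mul_le_of_le_one_right (norm_nonneg _) (hbd t)).trans
      (norm_poissonKernelAlpha_ofReal_mul_exp_sub_le hα (norm_nonneg z) hr1 _)
  have hintegral : ∫ t in (0 : ℝ)..2 * π, (2 ^ α * G (z.arg - t) + K) =
      2 ^ α * (8 * Real.arctan r) + 2 * π * K := by
    rw [intervalIntegral.integral_add (by apply Continuous.intervalIntegrable; fun_prop)
      intervalIntegrable_const, intervalIntegral.integral_const_mul,
      intervalIntegral.integral_comp_sub_left G, show z.arg - 0 = z.arg - 2 * π + 2 * π by ring,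
      integral_abs_poisson_sub_const (norm_nonneg z) hr1, intervalIntegral.integral_const,
      smul_eq_mul, sub_zero]
  have hnorm : ‖(1 / (2 * π) : ℂ)‖ = 1 / (2 * π) := by simp [abs_of_pos Real.pi_pos]
  rw [poissonExt_sub_mul_poissonExt_zero α hcont hz, norm_mul, hnorm]
  calc _ ≤ 1 / (2 * π) * ∫ t in (0 : ℝ)..2 * π, (2 ^ α * G (z.arg - t) + K) := by
        gcongr
        exact intervalIntegral.norm_integral_le_of_norm_le (by positivity)
          (ae_of_all _ fun t _ => hpointwise t)
          (by apply Continuous.intervalIntegrable; fun_prop)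
    _ = _ := by
        rw [hintegral, Real.rpow_add two_pos]
        field_simp
        ring

/-- Schwarz-type lemma for `α ≥ 0`: for `f = P_α[f*]` with `|f*| ≤ 1`,
`|f(z) - ((1-|z|²)^{α+1}/(1+|z|²)) f(0)| ≤ (2^{α+2}/π) arctan|z| + 2^{α+1}(1-|z|)(1-(1-|z|)^α)`. -/
theorem schwarz_alpha_nonneg (α : ℝ) (hα : 0 ≤ α) (fs : ℝ → ℂ) (hcont : Continuous fs)
    (hper : Function.Periodic fs (2 * Real.pi)) (hbd : ∀ t : ℝ, ‖fs t‖ ≤ 1) :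
    ∀ z ∈ Metric.ball (0 : ℂ) 1,
      ‖poissonExt α fs z -
          ((((1 - ‖z‖ ^ 2) ^ (α + 1) / (1 + ‖z‖ ^ 2) : ℝ)) : ℂ) *
            poissonExt α fs 0‖ ≤
        (2 : ℝ) ^ (α + 2) / Real.pi * Real.arctan (‖z‖) +
          (2 : ℝ) ^ (α + 1) * (1 - ‖z‖) * (1 - (1 - ‖z‖) ^ α) :=
  schwarz_alpha_nonneg_general α hα fs hcont hbd
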